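/- Let $s \ge 1$ and let $p \ge 3s+3$ be prime. Then $\sum_{j=1}^{p-1} \frac{(H_j^{(s)})^2}{j^{s}} \equiv \binom{3s}{s} \frac{B_{p-3s}}{3s} \pmod p$. -/

import Mathlib

open Finset

/-- Auxiliary: multiple harmonic sum with exponent list given in *reverse* order
(head is the last exponent `s_k`), via the standard recurrence. -/
def mhsAux : List ℕ → ℕ → ℚ
  | [], _ => 1
  | s :: rest, n => ∑ m ∈ Finset.Icc 1 n, mhsAux rest (m - 1) / (m : ℚ) ^ s

/-- Multiple harmonic sum `H(s_1,…,s_k; n) = ∑_{1 ≤ j_1 < ⋯ < j_k ≤ n} 1/(j_1^{s_1}⋯j_k^{s_k})`. -/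
def mhs (l : List ℕ) (n : ℕ) : ℚ := mhsAux l.reverse n

/-- Generalized harmonic number `H_n^{(s)} = ∑_{m=1}^n 1/m^s`. -/
def hsum (s n : ℕ) : ℚ := ∑ m ∈ Finset.Icc 1 n, 1 / (m : ℚ) ^ s


section ResMachinery

variable (p : ℕ) [hp : Fact p.Prime]

/-- p-integrality of a rational. -/
def pint (q : ℚ) : Prop := ‖(q : ℚ_[p])‖ ≤ 1

/-- residue of a p-integral rational in `ZMod p`. -/
noncomputable def res (q : ℚ) : ZMod p :=
  if h : ‖(q : ℚ_[p])‖ ≤ 1 then PadicInt.toZMod (⟨_, h⟩ : ℤ_[p]) else 0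

variable {p}

lemma pint_intCast (n : ℤ) : pint p (n : ℚ) := by
  unfold pint; push_cast; exact Padic.norm_int_le_one n

lemma pint_natCast (n : ℕ) : pint p (n : ℚ) := by
  simpa using pint_intCast (p := p) (n : ℤ)

lemma pint_one : pint p 1 := by simpa using pint_natCast (p := p) 1

lemma pint_zero : pint p 0 := by simpa using pint_natCast (p := p) 0

lemma pint_add {q r : ℚ} (hq : pint p q) (hr : pint p r) : pint p (q + r) := by
  unfold pint at *; push_cast
  exact le_trans (Padic.nonarchimedean _ _) (max_le hq hr)

lemma pint_neg {q : ℚ} (hq : pint p q) : pint p (-q) := by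
  unfold pint at *; push_cast; simpa using hq

lemma pint_sub {q r : ℚ} (hq : pint p q) (hr : pint p r) : pint p (q - r) := by
  simpa [sub_eq_add_neg] using pint_add hq (pint_neg hr)

lemma pint_mul {q r : ℚ} (hq : pint p q) (hr : pint p r) : pint p (q * r) := by
  unfold pint at *; push_cast
  rw [norm_mul]
  exact mul_le_one₀ hq (norm_nonneg _) hr

lemma pint_pow {q : ℚ} (hq : pint p q) (n : ℕ) : pint p (q ^ n) := by
  induction n with
  | zero => simpa using pint_one
  | succ n ih => rw [pow_succ]; exact pint_mul ih hq

lemma pint_sum {ι : Type*} {t : Finset ι} {f : ι → ℚ} (h : ∀ i ∈ t, pint p (f i)) :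
    pint p (∑ i ∈ t, f i) := by
  classical
  induction t using Finset.induction_on with
  | empty => simpa using pint_zero
  | insert _ _ hx ih =>
    rw [Finset.sum_insert hx]
    exact pint_add (h _ (Finset.mem_insert_self _ _))
      (ih fun i hi => h i (Finset.mem_insert_of_mem hi))

lemma natCast_norm_eq_one {n : ℕ} (h : ¬ p ∣ n) : ‖((n : ℚ_[p]))‖ = 1 := by
  have h1 : ‖((n : ℚ_[p]))‖ ≤ 1 := by
    have := pint_natCast (p := p) n
    unfold pint at this; push_cast at this; exact this
  rcases lt_or_eq_of_le h1 with h2 | h2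
  · exfalso
    apply h
    have : ‖((n : ℤ) : ℚ_[p])‖ < 1 := by push_cast at h2 ⊢; exact h2
    exact_mod_cast Padic.norm_intCast_lt_one_iff.1 this
  · exact h2

lemma pint_nat_inv {n : ℕ} (h : ¬ p ∣ n) : pint p ((n : ℚ)⁻¹) := by
  unfold pint
  push_cast
  rw [norm_inv, natCast_norm_eq_one (p := p) h]
  · norm_num

end ResMachinery

section ResLemmas

variable {p : ℕ} [hp : Fact p.Prime]

lemma res_def {q : ℚ} (h : pint p q) :
    res p q = PadicInt.toZMod (⟨_, h⟩ : ℤ_[p]) := dif_pos h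

lemma res_add {q r : ℚ} (hq : pint p q) (hr : pint p r) :
    res p (q + r) = res p q + res p r := by
  rw [res_def hq, res_def hr, res_def (pint_add hq hr)]
  refine Eq.trans ?_ (map_add _ _ _)
  congr 1

lemma res_mul {q r : ℚ} (hq : pint p q) (hr : pint p r) :
    res p (q * r) = res p q * res p r := by
  rw [res_def hq, res_def hr, res_def (pint_mul hq hr)]
  refine Eq.trans ?_ (map_mul _ _ _)
  congr 1

lemma res_natCast (n : ℕ) : res p (n : ℚ) = (n : ZMod p) := by
  rw [res_def (pint_natCast n)]
  have : (⟨((n : ℚ) : ℚ_[p]), pint_natCast n⟩ : ℤ_[p]) = (n : ℤ_[p]) := by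
    apply Subtype.ext
    push_cast
    rfl
  rw [this, map_natCast]

lemma res_intCast (n : ℤ) : res p (n : ℚ) = (n : ZMod p) := by
  rw [res_def (pint_intCast n)]
  have : (⟨((n : ℚ) : ℚ_[p]), pint_intCast n⟩ : ℤ_[p]) = (n : ℤ_[p]) := by
    apply Subtype.ext
    push_cast
    rfl
  rw [this, map_intCast]

lemma res_one : res p 1 = 1 := by simpa using res_natCast (p := p) 1

lemma res_zero : res p 0 = 0 := by simpa using res_natCast (p := p) 0

lemma res_neg {q : ℚ} (hq : pint p q) : res p (-q) = - res p q := by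
  rw [res_def hq, res_def (pint_neg hq)]
  refine Eq.trans ?_ (map_neg _ _)
  congr 1

lemma res_sub {q r : ℚ} (hq : pint p q) (hr : pint p r) :
    res p (q - r) = res p q - res p r := by
  rw [sub_eq_add_neg, res_add hq (pint_neg hr), res_neg hr, sub_eq_add_neg]

lemma res_pow {q : ℚ} (hq : pint p q) (n : ℕ) : res p (q ^ n) = (res p q) ^ n := by
  induction n with
  | zero => simpa using res_one
  | succ n ih => rw [pow_succ, pow_succ, res_mul (pint_pow hq n) hq, ih]

lemma res_sum {ι : Type*} {t : Finset ι} {f : ι → ℚ} (h : ∀ i ∈ t, pint p (f i)) :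
    res p (∑ i ∈ t, f i) = ∑ i ∈ t, res p (f i) := by
  classical
  induction t using Finset.induction_on with
  | empty => simpa using res_zero
  | insert _ _ hx ih =>
    rw [Finset.sum_insert hx, Finset.sum_insert hx,
      res_add (h _ (Finset.mem_insert_self _ _)) (pint_sum fun i hi => h i (Finset.mem_insert_of_mem hi)),
      ih fun i hi => h i (Finset.mem_insert_of_mem hi)]

lemma res_nat_inv {n : ℕ} (h : ¬ p ∣ n) : res p ((n : ℚ)⁻¹) = (n : ZMod p)⁻¹ := by
  have hn0 : (n : ℚ) ≠ 0 := by
    have : n ≠ 0 := fun h0 => h (by simp [h0])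
    exact_mod_cast this
  have hz : (n : ZMod p) ≠ 0 := by
    rw [Ne, ZMod.natCast_eq_zero_iff]
    exact h
  have h2 := res_mul (p := p) (pint_nat_inv h) (pint_natCast n)
  rw [inv_mul_cancel₀ hn0, res_one, res_natCast] at h2
  exact eq_inv_of_mul_eq_one_left h2.symm

/-- If `res p q = 0` for a `p`-integral rational, then `p` divides the numerator. -/
lemma dvd_num_of_res_eq_zero {q : ℚ} (hq : pint p q) (h : res p q = 0) :
    (p : ℤ) ∣ q.num := by
  rw [res_def hq] at h
  set z : ℤ_[p] := (⟨((q : ℚ) : ℚ_[p]), hq⟩ : ℤ_[p]) with hz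
  have hker : z ∈ RingHom.ker (PadicInt.toZMod (p := p)) := h
  rw [PadicInt.ker_toZMod, PadicInt.maximalIdeal_eq_span_p, Ideal.mem_span_singleton] at hker
  have hnorm' : ‖z‖ < 1 := (PadicInt.norm_lt_one_iff_dvd _).2 hker
  have hnorm : ‖((q : ℚ) : ℚ_[p])‖ < 1 := hnorm'
  have hden : ‖((q.den : ℚ) : ℚ_[p])‖ ≤ 1 := pint_natCast q.den
  have hqq : ((q.num : ℚ) : ℚ_[p]) = ((q : ℚ) : ℚ_[p]) * ((q.den : ℚ) : ℚ_[p]) := by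
    push_cast
    rw [Rat.cast_def (K := ℚ_[p])]
    field_simp
  have : ‖((q.num : ℚ) : ℚ_[p])‖ < 1 := by
    rw [hqq, norm_mul]
    calc ‖((q : ℚ) : ℚ_[p])‖ * ‖((q.den : ℚ) : ℚ_[p])‖
        ≤ ‖((q : ℚ) : ℚ_[p])‖ * 1 := by
          exact mul_le_mul_of_nonneg_left hden (norm_nonneg _)
      _ < 1 := by simpa using hnorm
  apply Padic.norm_intCast_lt_one_iff.1
  push_cast at this ⊢
  exact this

end ResLemmas

section Bernoulli

variable {p : ℕ} [hp : Fact p.Prime]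

lemma not_dvd_of_lt {n : ℕ} (h0 : 0 < n) (h1 : n < p) : ¬ p ∣ n := by
  intro h
  exact absurd (Nat.le_of_dvd h0 h) (by omega)

lemma pint_bernoulli' : ∀ n : ℕ, n + 1 < p → pint p (bernoulli' n) := by
  intro n
  induction n using Nat.strong_induction_on with
  | _ n ih =>
    intro hn
    rw [bernoulli'_def]
    apply pint_sub pint_one
    apply pint_sum
    intro k hk
    rw [mem_range] at hk
    have hcast : ((n : ℚ) - (k : ℚ) + 1) = ((n - k + 1 : ℕ) : ℚ) := by
      push_cast [Nat.cast_sub hk.le]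
      ring
    rw [hcast, div_eq_mul_inv]
    exact pint_mul (pint_mul (pint_natCast _) (pint_nat_inv (not_dvd_of_lt (by omega) (by omega))))
      (ih k hk (by omega))

lemma pint_bernoulli {n : ℕ} (hn : n + 1 < p) : pint p (bernoulli n) := by
  rw [bernoulli]
  exact pint_mul (pint_pow (pint_neg pint_one) n) (pint_bernoulli' n hn)

end Bernoulli

section PowerSum

variable {p : ℕ} [hp : Fact p.Prime]

lemma sum_range_pow_zmod (k : ℕ) :
    ∑ j ∈ range p, ((j : ZMod p)) ^ k = ∑ x : ZMod p, x ^ k := by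
  refine Finset.sum_nbij' (i := fun j => (j : ZMod p)) (j := fun x => x.val) ?_ ?_ ?_ ?_ ?_
  · intro a _; exact mem_univ _
  · intro a _; exact mem_range.2 (ZMod.val_lt a)
  · intro a ha; exact ZMod.val_cast_of_lt (mem_range.1 ha)
  · intro a _; exact ZMod.natCast_zmod_val a
  · intro a _; rfl


lemma psum_eq (k : ℕ) (hk : k ≠ 0) :
    ∑ j ∈ Icc 1 (p - 1), ((j : ZMod p)) ^ k = if (p - 1) ∣ k then -1 else 0 := by
  classical
  have hp1 : 1 ≤ p := hp.out.pos
  have h1 : ∑ j ∈ Icc 1 (p - 1), ((j : ZMod p)) ^ k = ∑ j ∈ range p, ((j : ZMod p)) ^ k := by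
    have : Icc 1 (p - 1) = Ico 1 p := by
      rw [← Finset.Ico_add_one_right_eq_Icc]
      congr 1
      omega
    rw [this, range_eq_Ico, Finset.sum_eq_sum_Ico_succ_bot hp.out.pos]
    simp [zero_pow hk]
  rw [h1, sum_range_pow_zmod]
  -- now sum over all of ZMod p equals sum over units
  have h2 : ∑ x : ZMod p, x ^ k = ∑ x : (ZMod p)ˣ, ((x : ZMod p)) ^ k := by
    let φ : (ZMod p)ˣ ↪ ZMod p := ⟨fun x => x, Units.val_injective⟩
    have hmap : univ.map φ = univ \ {0} := by
      ext x
      simpa only [mem_map, mem_univ, Function.Embedding.coeFn_mk, true_and, mem_sdiff,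
        mem_singleton, φ, IsUnit, ne_eq] using isUnit_iff_ne_zero
    calc ∑ x : ZMod p, x ^ k = ∑ x ∈ univ \ {(0 : ZMod p)}, x ^ k := by
          rw [← Finset.sum_sdiff ({0} : Finset (ZMod p)).subset_univ, sum_singleton,
            zero_pow hk, add_zero]
      _ = ∑ x : (ZMod p)ˣ, ((x : ZMod p)) ^ k := by
          rw [← hmap, Finset.sum_map]
          rfl
  rw [h2]
  have := FiniteField.sum_pow_units (ZMod p) k
  rwa [ZMod.card] at this

end PowerSum

lemma hsum_succ (s n : ℕ) : hsum s (n + 1) = hsum s n + 1 / ((n + 1 : ℕ) : ℚ) ^ s := by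
  rw [hsum, hsum, Finset.sum_Icc_succ_top (by omega)]

lemma tele (s n : ℕ) :
    (hsum s n) ^ 3 = ∑ j ∈ Icc 1 n,
      (3 * (hsum s j) ^ 2 / (j : ℚ) ^ s - 3 * (hsum s j) / (j : ℚ) ^ (2 * s)
        + 1 / (j : ℚ) ^ (3 * s)) := by
  induction n with
  | zero => simp [hsum]
  | succ n ih =>
    rw [Finset.sum_Icc_succ_top (by omega), ← ih, hsum_succ]
    have hX : ((n + 1 : ℕ) : ℚ) ≠ 0 := by
      exact_mod_cast Nat.succ_ne_zero n
    have hXs : ((n + 1 : ℕ) : ℚ) ^ s ≠ 0 := pow_ne_zero _ hX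
    have e2 : ((n + 1 : ℕ) : ℚ) ^ (2 * s) = (((n + 1 : ℕ) : ℚ) ^ s) ^ 2 := by
      rw [mul_comm, pow_mul]
    have e3 : ((n + 1 : ℕ) : ℚ) ^ (3 * s) = (((n + 1 : ℕ) : ℚ) ^ s) ^ 3 := by
      rw [mul_comm, pow_mul]
    push_cast [e2, e3] at *
    field_simp
    ring

section Helpers

variable {p : ℕ} [hp : Fact p.Prime]

lemma not_dvd_pow_of_le {m t : ℕ} (h1 : 1 ≤ m) (h2 : m ≤ p - 1) : ¬ p ∣ m ^ t := by
  intro h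
  have hm : p ∣ m := hp.out.dvd_of_dvd_pow h
  have := Nat.le_of_dvd (by omega) hm
  have hp1 : 1 ≤ p := hp.out.pos
  omega

lemma pint_one_div_pow {m t : ℕ} (h1 : 1 ≤ m) (h2 : m ≤ p - 1) :
    pint p (1 / (m : ℚ) ^ t) := by
  have : (1 : ℚ) / (m : ℚ) ^ t = ((m ^ t : ℕ) : ℚ)⁻¹ := by push_cast; rw [one_div]
  rw [this]
  exact pint_nat_inv (not_dvd_pow_of_le h1 h2)

lemma zmod_pow_inv {m t : ℕ} (hm : ¬ p ∣ m) (ht : t ≤ p - 1) :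
    ((m : ZMod p) ^ t)⁻¹ = (m : ZMod p) ^ (p - 1 - t) := by
  have hm0 : (m : ZMod p) ≠ 0 := by
    rw [Ne, ZMod.natCast_eq_zero_iff]; exact hm
  have key : (m : ZMod p) ^ (p - 1 - t) * (m : ZMod p) ^ t = 1 := by
    rw [← pow_add]
    have : p - 1 - t + t = p - 1 := by omega
    rw [this, ZMod.pow_card_sub_one_eq_one hm0]
  exact inv_eq_of_mul_eq_one_left key

lemma res_one_div_pow {m t : ℕ} (h1 : 1 ≤ m) (h2 : m ≤ p - 1) (ht : t ≤ p - 1) :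
    res p (1 / (m : ℚ) ^ t) = (m : ZMod p) ^ (p - 1 - t) := by
  have e : (1 : ℚ) / (m : ℚ) ^ t = ((m ^ t : ℕ) : ℚ)⁻¹ := by push_cast; rw [one_div]
  rw [e, res_nat_inv (not_dvd_pow_of_le h1 h2)]
  push_cast
  exact zmod_pow_inv (fun h => not_dvd_pow_of_le (t := 1) h1 h2 (by simpa using h)) ht

lemma pint_hsum {s j : ℕ} (hj : j ≤ p - 1) : pint p (hsum s j) := by
  apply pint_sum
  intro m hm
  rw [mem_Icc] at hm
  exact pint_one_div_pow hm.1 (le_trans hm.2 hj)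

lemma res_hsum {s j : ℕ} (hs : s ≤ p - 1) (hj : j ≤ p - 1) :
    res p (hsum s j) = ∑ m ∈ Icc 1 j, (m : ZMod p) ^ (p - 1 - s) := by
  rw [hsum, res_sum (fun m hm => by
    rw [mem_Icc] at hm
    exact pint_one_div_pow hm.1 (le_trans hm.2 hj))]
  apply Finset.sum_congr rfl
  intro m hm
  rw [mem_Icc] at hm
  exact res_one_div_pow hm.1 (le_trans hm.2 hj) hs

end Helpers

section Faulhaber

variable {p : ℕ} [hp : Fact p.Prime]

lemma res_faulhaber {a : ℕ} (ha1 : a + 1 < p) (n : ℕ) :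
    ∑ k ∈ range n, ((k : ZMod p)) ^ a =
      ∑ i ∈ range (a + 1),
        res p (bernoulli i) * (((a + 1).choose i : ℕ) : ZMod p)
          * ((n : ZMod p)) ^ (a + 1 - i) * (((a + 1 : ℕ) : ZMod p))⁻¹ := by
  have hQ' : ∑ k ∈ range n, (k : ℚ) ^ a = ∑ i ∈ range (a + 1),
      bernoulli i * (((a + 1).choose i : ℕ) : ℚ) * ((n : ℕ) : ℚ) ^ (a + 1 - i)
        * (((a + 1 : ℕ) : ℚ))⁻¹ := by
    rw [sum_range_pow n a]
    apply sum_congr rfl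
    intro i _
    push_cast
    ring
  have hterm : ∀ i ∈ range (a + 1), pint p
      (bernoulli i * (((a + 1).choose i : ℕ) : ℚ) * ((n : ℕ) : ℚ) ^ (a + 1 - i)
        * (((a + 1 : ℕ) : ℚ))⁻¹) := by
    intro i hi
    rw [mem_range] at hi
    exact pint_mul (pint_mul (pint_mul (pint_bernoulli (by omega)) (pint_natCast _))
      (pint_pow (pint_natCast _) _)) (pint_nat_inv (not_dvd_of_lt (by omega) ha1))
  have h1 := congrArg (res p) hQ'
  rw [res_sum (fun k _ => pint_pow (pint_natCast _) _), res_sum hterm] at h1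
  calc ∑ k ∈ range n, ((k : ZMod p)) ^ a
      = ∑ k ∈ range n, res p ((k : ℚ) ^ a) := by
        apply sum_congr rfl
        intro k _
        rw [res_pow (pint_natCast _), res_natCast]
    _ = _ := by
        rw [h1]
        apply sum_congr rfl
        intro i hi
        rw [mem_range] at hi
        rw [res_mul (pint_mul (pint_mul (pint_bernoulli (by omega)) (pint_natCast _))
              (pint_pow (pint_natCast _) _)) (pint_nat_inv (not_dvd_of_lt (by omega) ha1)),
            res_mul (pint_mul (pint_bernoulli (by omega)) (pint_natCast _))
              (pint_pow (pint_natCast _) _),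
            res_mul (pint_bernoulli (by omega)) (pint_natCast _),
            res_natCast, res_pow (pint_natCast _), res_natCast,
            res_nat_inv (not_dvd_of_lt (by omega) ha1)]

end Faulhaber

section Helpers2

variable {p : ℕ} [hp : Fact p.Prime]

lemma pint_div_pow {q : ℚ} (hq : pint p q) {m t : ℕ} (h1 : 1 ≤ m) (h2 : m ≤ p - 1) :
    pint p (q / (m : ℚ) ^ t) := by
  rw [div_eq_mul_one_div]
  exact pint_mul hq (pint_one_div_pow h1 h2)

lemma res_div_pow {q : ℚ} (hq : pint p q) {m t : ℕ} (h1 : 1 ≤ m) (h2 : m ≤ p - 1)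
    (ht : t ≤ p - 1) :
    res p (q / (m : ℚ) ^ t) = res p q * (m : ZMod p) ^ (p - 1 - t) := by
  rw [div_eq_mul_one_div, res_mul hq (pint_one_div_pow h1 h2), res_one_div_pow h1 h2 ht]

/-- a divisibility helper -/
lemma not_dvd_between {d k : ℕ} (h0 : 0 < k) (h1 : k ≠ d) (h2 : k < 2 * d) : ¬ d ∣ k := by
  intro hdvd
  have hd0 : 0 < d := by
    rcases Nat.eq_zero_or_pos d with h | h
    · subst h; omega
    · exact h
  have hle : d ≤ k := Nat.le_of_dvd h0 hdvd
  have h3 : d ∣ (k - d) := Nat.dvd_sub hdvd dvd_rfl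
  have h4 : k - d = 0 := Nat.eq_zero_of_dvd_of_lt h3 (by omega)
  omega

end Helpers2

section MainComp

variable {p : ℕ} [hp : Fact p.Prime]

/-- The residue of the harmonic number as a Bernoulli polynomial expression. -/
lemma res_hsum_poly {s : ℕ} (hs : 1 ≤ s) (hge : 3 * s + 3 ≤ p) {j : ℕ} (hj1 : 1 ≤ j)
    (hj2 : j ≤ p - 1) :
    res p (hsum s j) =
      (∑ i ∈ range (p - 1 - s + 1),
        (res p (bernoulli i) * (((p - 1 - s + 1).choose i : ℕ) : ZMod p)
          * (((p - 1 - s + 1 : ℕ)) : ZMod p)⁻¹) * ((j : ZMod p)) ^ (p - 1 - s + 1 - i))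
        + ((j : ZMod p)) ^ (p - 1 - s) := by
  have hp2 : 2 ≤ p := hp.out.two_le
  rw [res_hsum (by omega) hj2]
  have h1 : ∑ m ∈ Icc 1 j, ((m : ZMod p)) ^ (p - 1 - s)
      = ∑ k ∈ range (j + 1), ((k : ZMod p)) ^ (p - 1 - s) := by
    rw [range_eq_Ico, Finset.sum_eq_sum_Ico_succ_bot (by omega)]
    have h2 : Icc 1 j = Ico 1 (j + 1) := by rw [← Finset.Ico_add_one_right_eq_Icc]
    rw [h2]
    norm_num
    omega
  rw [h1, Finset.sum_range_succ, res_faulhaber (by omega) j]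
  congr 1
  apply sum_congr rfl
  intro i _
  ring

lemma res_Q {s : ℕ} (hs : 1 ≤ s) (hge : 3 * s + 3 ≤ p) :
    res p (∑ j ∈ Icc 1 (p - 1), hsum s j / (j : ℚ) ^ (2 * s)) =
      -(res p (bernoulli (p - 3 * s)) * (((p - 1 - s + 1).choose (p - 3 * s) : ℕ) : ZMod p)
          * (((p - 1 - s + 1 : ℕ)) : ZMod p)⁻¹) := by
  have hp2 : 2 ≤ p := hp.out.two_le
  set D : ℕ → ZMod p := fun i =>
    res p (bernoulli i) * (((p - 1 - s + 1).choose i : ℕ) : ZMod p)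
      * (((p - 1 - s + 1 : ℕ)) : ZMod p)⁻¹ with hD
  rw [res_sum (fun j hj => by
    rw [mem_Icc] at hj
    exact pint_div_pow (pint_hsum hj.2) hj.1 hj.2)]
  have step1 : ∀ j ∈ Icc 1 (p - 1),
      res p (hsum s j / (j : ℚ) ^ (2 * s)) =
        (∑ i ∈ range (p - 1 - s + 1),
          D i * ((j : ZMod p)) ^ (p - 1 - s + 1 - i + (p - 1 - 2 * s)))
          + ((j : ZMod p)) ^ (p - 1 - s + (p - 1 - 2 * s)) := by
    intro j hj
    rw [mem_Icc] at hj
    rw [res_div_pow (pint_hsum hj.2) hj.1 hj.2 (by omega),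
      res_hsum_poly hs hge hj.1 hj.2, add_mul, Finset.sum_mul]
    congr 1
    · apply sum_congr rfl
      intro i _
      rw [mul_assoc, ← pow_add]
    · rw [← pow_add]
  rw [Finset.sum_congr rfl step1, Finset.sum_add_distrib, Finset.sum_comm]
  have hlast : ∑ j ∈ Icc 1 (p - 1), ((j : ZMod p)) ^ (p - 1 - s + (p - 1 - 2 * s)) = 0 := by
    rw [psum_eq _ (by omega), if_neg]
    exact not_dvd_between (by omega) (by omega) (by omega)
  have hmain : ∀ i ∈ range (p - 1 - s + 1),
      ∑ j ∈ Icc 1 (p - 1), D i * ((j : ZMod p)) ^ (p - 1 - s + 1 - i + (p - 1 - 2 * s))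
        = if i = p - 3 * s then -D (p - 3 * s) else 0 := by
    intro i hi
    rw [mem_range] at hi
    rw [← Finset.mul_sum, psum_eq _ (by omega)]
    by_cases hii : i = p - 3 * s
    · subst hii
      have hdvd : (p - 1) ∣ (p - 1 - s + 1 - (p - 3 * s) + (p - 1 - 2 * s)) := by
        have he : p - 1 - s + 1 - (p - 3 * s) + (p - 1 - 2 * s) = p - 1 := by omega
        rw [he]
      rw [if_pos hdvd, if_pos rfl]
      ring
    · rw [if_neg, if_neg hii, mul_zero]
      exact not_dvd_between (by omega) (by omega) (by omega)
  rw [Finset.sum_congr rfl hmain, Finset.sum_ite_eq' (range (p - 1 - s + 1)) (p - 3 * s)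
    (fun _ => -D (p - 3 * s)), if_pos (mem_range.2 (by omega)), hlast, add_zero]

end MainComp

section MainComp2

variable {p : ℕ} [hp : Fact p.Prime]

lemma res_S_eq_Q {s : ℕ} (hs : 1 ≤ s) (hge : 3 * s + 3 ≤ p) :
    res p (∑ j ∈ Icc 1 (p - 1), (hsum s j) ^ 2 / (j : ℚ) ^ s) =
      res p (∑ j ∈ Icc 1 (p - 1), hsum s j / (j : ℚ) ^ (2 * s)) := by
  have hp2 : 2 ≤ p := hp.out.two_le
  set S : ℚ := ∑ j ∈ Icc 1 (p - 1), (hsum s j) ^ 2 / (j : ℚ) ^ s with hSdef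
  set Q : ℚ := ∑ j ∈ Icc 1 (p - 1), hsum s j / (j : ℚ) ^ (2 * s) with hQdef
  set P3 : ℚ := ∑ j ∈ Icc 1 (p - 1), 1 / (j : ℚ) ^ (3 * s) with hP3def
  have hpintS : pint p S := pint_sum (fun j hj => by
    rw [mem_Icc] at hj
    exact pint_div_pow (pint_pow (pint_hsum hj.2) 2) hj.1 hj.2)
  have hpintQ : pint p Q := pint_sum (fun j hj => by
    rw [mem_Icc] at hj
    exact pint_div_pow (pint_hsum hj.2) hj.1 hj.2)
  have hpintP3 : pint p P3 := pint_sum (fun j hj => by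
    rw [mem_Icc] at hj
    exact pint_div_pow pint_one hj.1 hj.2)
  -- the rational telescoping identity
  have htele : (hsum s (p - 1)) ^ 3 = 3 * S - 3 * Q + P3 := by
    rw [tele s (p - 1), hSdef, hQdef, hP3def, Finset.mul_sum, Finset.mul_sum,
      ← Finset.sum_sub_distrib, ← Finset.sum_add_distrib]
    apply sum_congr rfl
    intro j _
    ring
  have h1 := congrArg (res p) htele
  have hc3 : (3 : ℚ) = ((3 : ℕ) : ℚ) := by norm_num
  rw [hc3] at h1
  rw [res_pow (pint_hsum le_rfl) 3, res_hsum (by omega) le_rfl,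
    psum_eq _ (by omega : p - 1 - s ≠ 0),
    if_neg (not_dvd_between (by omega) (by omega) (by omega)),
    res_add (pint_sub (pint_mul (pint_natCast 3) hpintS) (pint_mul (pint_natCast 3) hpintQ))
      hpintP3,
    res_sub (pint_mul (pint_natCast 3) hpintS) (pint_mul (pint_natCast 3) hpintQ),
    res_mul (pint_natCast 3) hpintS, res_mul (pint_natCast 3) hpintQ] at h1
  have hresP3 : res p P3 = 0 := by
    rw [hP3def, res_sum (fun j hj => by
      rw [mem_Icc] at hj
      exact pint_div_pow pint_one hj.1 hj.2)]
    have : ∀ j ∈ Icc 1 (p - 1), res p ((1 : ℚ) / (j : ℚ) ^ (3 * s))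
        = ((j : ZMod p)) ^ (p - 1 - 3 * s) := by
      intro j hj
      rw [mem_Icc] at hj
      exact res_one_div_pow hj.1 hj.2 (by omega)
    rw [Finset.sum_congr rfl this, psum_eq _ (by omega),
      if_neg (not_dvd_between (by omega) (by omega) (by omega))]
  rw [hresP3, add_zero, res_natCast] at h1
  have h3 : ((3 : ℕ) : ZMod p) ≠ 0 := by
    rw [Ne, ZMod.natCast_eq_zero_iff]
    exact not_dvd_of_lt (by omega) (by omega)
  have h2 : ((3 : ℕ) : ZMod p) * (res p S - res p Q) = 0 := by
    rw [mul_sub]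
    linear_combination -h1
  rcases mul_eq_zero.1 h2 with h | h
  · exact absurd h h3
  · exact sub_eq_zero.1 h

end MainComp2

section Binom

variable {p : ℕ} [hp : Fact p.Prime]

lemma desc_cast (s : ℕ) : ∀ k : ℕ, s + k ≤ p →
    (((p - s).descFactorial k : ℕ) : ZMod p)
      = (-1) ^ k * ((s.ascFactorial k : ℕ) : ZMod p) := by
  intro k
  induction k with
  | zero => simp
  | succ k ih =>
    intro hk
    rw [Nat.descFactorial_succ, Nat.ascFactorial_succ]
    have e1 : p - s - k = p - (s + k) := by omega
    rw [e1, Nat.cast_mul, Nat.cast_mul, Nat.cast_sub (show s + k ≤ p by omega),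
      ZMod.natCast_self, zero_sub, ih (by omega)]
    push_cast
    ring

lemma binom_final {s : ℕ} (hs : 1 ≤ s) (hge : 3 * s + 3 ≤ p) :
    -((((p - 1 - s + 1).choose (p - 3 * s) : ℕ) : ZMod p)
        * (((p - 1 - s + 1 : ℕ)) : ZMod p)⁻¹)
      = (((3 * s).choose s : ℕ) : ZMod p) * (((3 * s : ℕ)) : ZMod p)⁻¹ := by
  have hp2 : 2 ≤ p := hp.out.two_le
  have ha1 : p - 1 - s + 1 = p - s := by omega
  rw [ha1]
  have c1 : (p - s).choose (p - 3 * s) = (p - s).choose (2 * s) := by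
    have e : p - 3 * s = (p - s) - (2 * s) := by omega
    rw [e, Nat.choose_symm (by omega)]
  have hdesc := desc_cast (p := p) s (2 * s) (by omega)
  have hneg : ((-1 : ZMod p)) ^ (2 * s) = 1 := by
    rw [pow_mul]
    norm_num
  rw [hneg, one_mul, Nat.descFactorial_eq_factorial_mul_choose,
    Nat.ascFactorial_eq_factorial_mul_choose'] at hdesc
  have e2 : s + 2 * s - 1 = 3 * s - 1 := by omega
  rw [e2] at hdesc
  push_cast at hdesc
  have hfac : (((2 * s).factorial : ℕ) : ZMod p) ≠ 0 := by
    rw [Ne, ZMod.natCast_eq_zero_iff]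
    intro hdvd
    have := (Nat.Prime.dvd_factorial hp.out).1 hdvd
    omega
  have hCC : (((p - s).choose (2 * s) : ℕ) : ZMod p)
      = (((3 * s - 1).choose (2 * s) : ℕ) : ZMod p) := mul_left_cancel₀ hfac hdesc
  have f1 : (3 * s).choose s * s.factorial * (2 * s).factorial = (3 * s).factorial := by
    have h := Nat.choose_mul_factorial_mul_factorial (show s ≤ 3 * s by omega)
    rwa [show 3 * s - s = 2 * s by omega] at h
  have f2 : (3 * s - 1).choose (2 * s) * (2 * s).factorial * (s - 1).factorial = (3 * s - 1).factorial := by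
    have h := Nat.choose_mul_factorial_mul_factorial (show 2 * s ≤ 3 * s - 1 by omega)
    rwa [show 3 * s - 1 - 2 * s = s - 1 by omega] at h
  have f3 : (3 * s).factorial = 3 * s * (3 * s - 1).factorial := by
    conv_lhs => rw [show 3 * s = (3 * s - 1) + 1 by omega]
    rw [Nat.factorial_succ]
    congr 2
    omega
  have f4 : s.factorial = s * (s - 1).factorial := by
    conv_lhs => rw [show s = (s - 1) + 1 by omega]
    rw [Nat.factorial_succ]
    congr 2
    omega
  have hN : 3 * ((3 * s - 1).choose (2 * s)) = (3 * s).choose s := by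
    apply Nat.eq_of_mul_eq_mul_right (show 0 < s.factorial * (2 * s).factorial by positivity)
    calc 3 * ((3 * s - 1).choose (2 * s)) * (s.factorial * (2 * s).factorial)
        = 3 * s * ((3 * s - 1).choose (2 * s) * (2 * s).factorial * (s - 1).factorial) := by rw [f4]; ring
      _ = 3 * s * (3 * s - 1).factorial := by rw [f2]
      _ = (3 * s).factorial := by rw [f3]
      _ = (3 * s).choose s * s.factorial * (2 * s).factorial := f1.symm
      _ = (3 * s).choose s * (s.factorial * (2 * s).factorial) := by ring
  have hNF : (3 : ZMod p) * (((3 * s - 1).choose (2 * s) : ℕ) : ZMod p)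
      = (((3 * s).choose s : ℕ) : ZMod p) := by
    exact_mod_cast congrArg (fun n : ℕ => (n : ZMod p)) hN
  have hps : (((p - s : ℕ)) : ZMod p) = -((s : ℕ) : ZMod p) := by
    rw [Nat.cast_sub (by omega), ZMod.natCast_self, zero_sub]
  have h3s : (((3 * s : ℕ)) : ZMod p) = 3 * ((s : ℕ) : ZMod p) := by push_cast; ring
  have hsne : ((s : ℕ) : ZMod p) ≠ 0 := by
    rw [Ne, ZMod.natCast_eq_zero_iff]
    exact not_dvd_of_lt (by omega) (by omega)
  have h3ne : (3 : ZMod p) ≠ 0 := by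
    have h' : ((3 : ℕ) : ZMod p) ≠ 0 := by
      rw [Ne, ZMod.natCast_eq_zero_iff]
      exact not_dvd_of_lt (by omega) (by omega)
    simpa using h'
  rw [c1, hCC, hps, h3s, ← hNF]
  field_simp

end Binom

theorem stmt14 (s p : ℕ) (hs : 1 ≤ s) (hp : p.Prime) (hge : 3 * s + 3 ≤ p) :
    (p : ℤ) ∣ ((∑ j ∈ Finset.Icc 1 (p - 1), (hsum s j) ^ 2 / (j : ℚ) ^ s)
      - (Nat.choose (3 * s) s) * bernoulli (p - 3 * s) / (3 * s)).num := by
  haveI hpf : Fact p.Prime := ⟨hp⟩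
  have hp2 : 2 ≤ p := hp.two_le
  set S : ℚ := ∑ j ∈ Finset.Icc 1 (p - 1), (hsum s j) ^ 2 / (j : ℚ) ^ s with hS
  set R : ℚ := (Nat.choose (3 * s) s) * bernoulli (p - 3 * s) / (3 * s) with hR
  have hpintS : pint p S := pint_sum (fun j hj => by
    rw [mem_Icc] at hj
    exact pint_div_pow (pint_pow (pint_hsum hj.2) 2) hj.1 hj.2)
  have hRR : R = ((Nat.choose (3 * s) s : ℕ) : ℚ) * bernoulli (p - 3 * s)
      * (((3 * s : ℕ)) : ℚ)⁻¹ := by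
    rw [hR]
    push_cast
    ring
  have hpintR : pint p R := by
    rw [hRR]
    exact pint_mul (pint_mul (pint_natCast _) (pint_bernoulli (by omega)))
      (pint_nat_inv (not_dvd_of_lt (by omega) (by omega)))
  apply dvd_num_of_res_eq_zero (pint_sub hpintS hpintR)
  rw [res_sub hpintS hpintR, hS, res_S_eq_Q hs hge, res_Q hs hge]
  have hresR : res p R = res p (bernoulli (p - 3 * s)) * ((Nat.choose (3 * s) s : ℕ) : ZMod p)
      * (((3 * s : ℕ)) : ZMod p)⁻¹ := by
    rw [hRR, res_mul (pint_mul (pint_natCast _) (pint_bernoulli (by omega)))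
        (pint_nat_inv (not_dvd_of_lt (by omega) (by omega))),
      res_mul (pint_natCast _) (pint_bernoulli (by omega)), res_natCast,
      res_nat_inv (not_dvd_of_lt (by omega) (by omega))]
    ring
  rw [hresR]
  linear_combination (res p (bernoulli (p - 3 * s))) * binom_final (p := p) hs hge
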